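/- arXiv:1402.4360 — 4 statements merged into one kernel-verified Lean document; each statement's English description precedes it below -/
import Mathlib

section
/- Let X and Y be finite-valued random variables on a probability space with values in 𝒳 and 𝒴, and let P denote the law of ⟨X,Y⟩. Say that x ∈ 𝒳 and y ∈ 𝒴 are in the same connected component if they are related by the reflexive-transitive closure of the relation on the disjoint union 𝒳 ⊔ 𝒴 that relates x and y whenever P({(x,y)}) > 0. Then the pair (X,Y) is trivial if and only if there exist functions a : 𝒳 → [0,∞) and b : 𝒴 → [0,∞) such that for every x ∈ 𝒳 and y ∈ 𝒴 lying in the same connected component, P({(x,y)}) = a(x) · b(y). -/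
/-!
Write `p(x,y,z)` for the joint mass of `(X,Y,Z)`. By the equality case of Gibbs' inequality,
`I[X;Y|Z] = I[Z;X|Y] = I[Z;Y|X] = 0` says `p(x,y,z) p(z) = p(x,z) p(y,z)`,
`p(x,y,z) p(y) = p(y,z) p(x,y)` and `p(x,y,z) p(x) = p(x,z) p(x,y)`. The last two show that the
conditional law of `Z` given `X = x` equals the one given `Y = y` whenever `p(x,y) > 0`, so it is
constant on connected components; with the first identity this gives
`p(x,y) = p(x) · ∑_z p(y,z)² / (p(y) p(z))` inside a component.
Conversely, if `p(x,y)` factors on components, let `Z` be the component `[X]` of `X`. Then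
`p(x,y,z) = 1{z = [x]} · 1{z = [y]} · a(x) b(y)` is a product of a function of `(x,z)` and one
of `(y,z)`, and likewise for the other two groupings, which is the required conditional
independence.
-/

open MeasureTheory Real
open scoped ENNReal

namespace SecureComputation

variable {Ω : Type*} [MeasurableSpace Ω]

/-- The pair random variable `⟨X,Y⟩`. -/
def pair {𝒳 𝒴 : Type*} (X : Ω → 𝒳) (Y : Ω → 𝒴) : Ω → 𝒳 × 𝒴 := fun ω => (X ω, Y ω)

/-- Shannon entropy `H[X]` of a finite-valued random variable. -/
noncomputable def ent {𝒳 : Type*} (μ : Measure Ω) (X : Ω → 𝒳) : ℝ :=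
  ∑' x : 𝒳, negMulLog ((μ (X ⁻¹' {x})).toReal)

/-- Mutual information `I[X;Y]`. -/
noncomputable def mi {𝒳 𝒴 : Type*} (μ : Measure Ω) (X : Ω → 𝒳) (Y : Ω → 𝒴) : ℝ :=
  ent μ X + ent μ Y - ent μ (pair X Y)

/-- Conditional mutual information `I[X;Y|Z]`. -/
noncomputable def cmi {𝒳 𝒴 𝒵 : Type*} (μ : Measure Ω) (X : Ω → 𝒳) (Y : Ω → 𝒴)
    (Z : Ω → 𝒵) : ℝ :=
  ent μ (pair X Z) + ent μ (pair Y Z) - ent μ (pair (pair X Y) Z) - ent μ Z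

/-- Conditional entropy `H[X|Y]`. -/
noncomputable def condEnt {𝒳 𝒴 : Type*} (μ : Measure Ω) (X : Ω → 𝒳) (Y : Ω → 𝒴) : ℝ :=
  ent μ (pair X Y) - ent μ Y

/-- A finite-valued random variable: preimages of points are measurable. -/
def DiscreteRV {𝒳 : Type*} (X : Ω → 𝒳) : Prop := ∀ x, MeasurableSet (X ⁻¹' {x})

/-- The pair `(X,Y)` is trivial: some finite-valued `Z` on the same space has
`I[X;Y|Z] = 0`, `I[Z;X|Y] = 0`, `I[Z;Y|X] = 0`. -/
def IsTrivialPair {𝒳 𝒴 : Type*} (μ : Measure Ω) (X : Ω → 𝒳) (Y : Ω → 𝒴) : Prop :=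
  ∃ (𝒵 : Type) (_ : Fintype 𝒵) (Z : Ω → 𝒵), DiscreteRV Z ∧
    cmi μ X Y Z = 0 ∧ cmi μ Z X Y = 0 ∧ cmi μ Z Y X = 0

/-- The edge relation on `𝒳 ⊕ 𝒴` of the bipartite graph of the joint law of `(X,Y)`:
`x` and `y` are related whenever `P(X = x ∧ Y = y) > 0`. -/
def edgeRel {𝒳 𝒴 : Type*} (μ : Measure Ω) (X : Ω → 𝒳) (Y : Ω → 𝒴) :
    𝒳 ⊕ 𝒴 → 𝒳 ⊕ 𝒴 → Prop := fun p q =>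
  (∃ x y, p = Sum.inl x ∧ q = Sum.inr y ∧ μ {ω | X ω = x ∧ Y ω = y} ≠ 0) ∨
  (∃ x y, p = Sum.inr y ∧ q = Sum.inl x ∧ μ {ω | X ω = x ∧ Y ω = y} ≠ 0)

/-- `x ∈ 𝒳` and `y ∈ 𝒴` lie in the same connected component of the bipartite graph:
they are related by the reflexive-transitive closure of the edge relation. -/
def SameComponent {𝒳 𝒴 : Type*} (μ : Measure Ω) (X : Ω → 𝒳) (Y : Ω → 𝒴)
    (x : 𝒳) (y : 𝒴) : Prop :=
  Relation.ReflTransGen (edgeRel μ X Y) (Sum.inl x) (Sum.inr y)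

open Finset Relation InformationTheory

section Mass

variable {α β γ : Type*} [Fintype α] [Fintype β]

/-- The first two coordinates of the mass function `q` are conditionally independent given the
third. -/
def IsCondIndep (q : α → β → γ → ℝ) : Prop :=
  ∀ a b c, q a b c * ∑ a', ∑ b', q a' b' c = (∑ b', q a b' c) * ∑ a', q a' b c

noncomputable def condMutualInfoOfMass [Fintype γ] (q : α → β → γ → ℝ) : ℝ :=
  ∑ a, ∑ b, ∑ c, q a b c * (log (q a b c) + log (∑ a', ∑ b', q a' b' c)
    - log (∑ b', q a b' c) - log (∑ a', q a' b c))

theorem isCondIndep_of_eq_mul {q : α → β → γ → ℝ} (f : α → γ → ℝ) (g : β → γ → ℝ)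
    (h : ∀ a b c, q a b c = f a c * g b c) : IsCondIndep q := by
  intro a b c
  simp only [h, ← mul_sum, ← sum_mul]
  ring

theorem eq_of_sum_mul_log_sub_log_eq_zero {ι : Type*} [Fintype ι] {u v : ι → ℝ}
    (hu : ∀ i, 0 ≤ u i) (hv : ∀ i, 0 ≤ v i) (huv : ∀ i, v i = 0 → u i = 0)
    (hsum : ∑ i, v i ≤ ∑ i, u i) (h : ∑ i, u i * (log (u i) - log (v i)) = 0) : u = v := by
  have hkl_nonneg i : 0 ≤ v i * klFun (u i / v i) :=
    mul_nonneg (hv i) (klFun_nonneg (div_nonneg (hu i) (hv i)))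
  have hterm i : u i * (log (u i) - log (v i)) = (u i - v i) + v i * klFun (u i / v i) := by
    rcases (hv i).eq_or_lt with hv0 | hv0
    · simp [← hv0, huv i hv0.symm]
    rcases (hu i).eq_or_lt with hu0 | hu0
    · simp [← hu0, klFun_zero]
    rw [klFun_apply, log_div hu0.ne' hv0.ne']
    field_simp
    ring
  have hkl : ∑ i, v i * klFun (u i / v i) = 0 := by
    simp only [hterm, sum_add_distrib, sum_sub_distrib] at h
    linarith [sum_nonneg fun i (_ : i ∈ univ) ↦ hkl_nonneg i]
  funext i
  rcases mul_eq_zero.mp ((sum_eq_zero_iff_of_nonneg fun i _ ↦ hkl_nonneg i).mp hkl i (mem_univ i))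
    with hv0 | hkl0
  · rw [hv0, huv i hv0]
  · rw [klFun_eq_zero_iff (div_nonneg (hu i) (hv i))] at hkl0
    exact (div_eq_one_iff_eq (by rintro hv0; simp [hv0] at hkl0)).mp hkl0

variable {q : α → β → γ → ℝ}

theorem le_sum_marginals (hq : ∀ a b c, 0 ≤ q a b c) (a : α) (b : β) (c : γ) :
    q a b c ≤ ∑ b', q a b' c ∧ q a b c ≤ ∑ a', q a' b c ∧
      ∑ b', q a b' c ≤ ∑ a', ∑ b', q a' b' c :=
  ⟨single_le_sum (fun b' _ ↦ hq a b' c) (mem_univ b),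
    single_le_sum (fun a' _ ↦ hq a' b c) (mem_univ a),
    single_le_sum (f := fun a' ↦ ∑ b', q a' b' c) (fun a' _ ↦ sum_nonneg fun b' _ ↦ hq a' b' c)
      (mem_univ a)⟩

noncomputable def condProduct (q : α → β → γ → ℝ) (a : α) (b : β) (c : γ) : ℝ :=
  (∑ b', q a b' c) * (∑ a', q a' b c) / ∑ a', ∑ b', q a' b' c

theorem condProduct_nonneg (hq : ∀ a b c, 0 ≤ q a b c) (a : α) (b : β) (c : γ) :
    0 ≤ condProduct q a b c := by
  obtain ⟨h₁, h₂, h₃⟩ := le_sum_marginals hq a b c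
  have := hq a b c
  exact div_nonneg (mul_nonneg (by linarith) (by linarith)) (by linarith)

theorem eq_zero_of_condProduct_eq_zero (hq : ∀ a b c, 0 ≤ q a b c) {a : α} {b : β} {c : γ}
    (h : condProduct q a b c = 0) : q a b c = 0 := by
  obtain ⟨h₁, h₂, h₃⟩ := le_sum_marginals hq a b c
  have := hq a b c
  rcases div_eq_zero_iff.mp h with h | h
  · rcases mul_eq_zero.mp h with h | h <;> linarith
  · linarith

theorem mul_log_sub_log_condProduct (hq : ∀ a b c, 0 ≤ q a b c) (a : α) (b : β) (c : γ) :
    q a b c * (log (q a b c) - log (condProduct q a b c)) = q a b c * (log (q a b c) +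
      log (∑ a', ∑ b', q a' b' c) - log (∑ b', q a b' c) - log (∑ a', q a' b c)) := by
  rcases (hq a b c).eq_or_lt with h0 | hpos
  · simp [← h0]
  obtain ⟨h₁, h₂, h₃⟩ := le_sum_marginals hq a b c
  have hAC := hpos.trans_le h₁
  have hBC := hpos.trans_le h₂
  rw [condProduct, log_div (mul_pos hAC hBC).ne' (hAC.trans_le h₃).ne', log_mul hAC.ne' hBC.ne']
  ring

theorem sum_sum_condProduct_le (c : γ) :
    ∑ a, ∑ b, condProduct q a b c ≤ ∑ a, ∑ b, q a b c := by
  have hsum : ∑ b, ∑ a', q a' b c = ∑ a', ∑ b', q a' b' c := sum_comm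
  simp only [condProduct, mul_div_right_comm _ (∑ a', q a' _ c), ← mul_sum, ← sum_mul, hsum,
    ← sum_div]
  rcases eq_or_ne (∑ a', ∑ b', q a' b' c) 0 with h0 | h0
  · simp [h0]
  · rw [div_mul_cancel₀ _ h0]

theorem isCondIndep_of_eq_condProduct (hq : ∀ a b c, 0 ≤ q a b c)
    (h : ∀ a b c, q a b c = condProduct q a b c) : IsCondIndep q := by
  intro a b c
  obtain ⟨h₁, -, h₃⟩ := le_sum_marginals hq a b c
  rcases eq_or_ne (∑ a', ∑ b', q a' b' c) 0 with h0 | h0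
  · rw [h0, le_antisymm (h0 ▸ h₃) ((hq a b c).trans h₁), mul_zero, zero_mul]
  · exact (eq_div_iff h0).mp (h a b c)

variable [Fintype γ]

theorem condMutualInfoOfMass_eq_zero_of_isCondIndep (hq : ∀ a b c, 0 ≤ q a b c)
    (h : IsCondIndep q) : condMutualInfoOfMass q = 0 := by
  refine sum_eq_zero fun a _ ↦ sum_eq_zero fun b _ ↦ sum_eq_zero fun c _ ↦ ?_
  rcases (hq a b c).eq_or_lt with h0 | hpos
  · rw [← h0, zero_mul]
  obtain ⟨hAC, hBC, hC⟩ := le_sum_marginals hq a b c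
  have hlog := congrArg log (h a b c)
  rw [log_mul hpos.ne' (hpos.trans_le (hAC.trans hC)).ne',
    log_mul (hpos.trans_le hAC).ne' (hpos.trans_le hBC).ne'] at hlog
  rw [hlog]
  ring

theorem isCondIndep_of_condMutualInfoOfMass_eq_zero (hq : ∀ a b c, 0 ≤ q a b c)
    (h : condMutualInfoOfMass q = 0) : IsCondIndep q := by
  suffices (fun t : γ × α × β ↦ q t.2.1 t.2.2 t.1) = fun t ↦ condProduct q t.2.1 t.2.2 t.1 from
    isCondIndep_of_eq_condProduct hq fun a b c ↦ congrFun this (c, a, b)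
  refine eq_of_sum_mul_log_sub_log_eq_zero (fun _ ↦ hq _ _ _) (fun _ ↦ condProduct_nonneg hq _ _ _)
    (fun _ ↦ eq_zero_of_condProduct_eq_zero hq) ?_ ?_
  · simp only [Fintype.sum_prod_type]
    exact sum_le_sum fun c _ ↦ sum_sum_condProduct_le c
  · simp only [Fintype.sum_prod_type, mul_log_sub_log_condProduct hq]
    exact (sum_comm.trans (sum_congr rfl fun a _ ↦ sum_comm)).trans h

theorem condMutualInfoOfMass_eq_zero_iff (hq : ∀ a b c, 0 ≤ q a b c) :
    condMutualInfoOfMass q = 0 ↔ IsCondIndep q :=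
  ⟨isCondIndep_of_condMutualInfoOfMass_eq_zero hq, condMutualInfoOfMass_eq_zero_of_isCondIndep hq⟩

theorem sum_le_sum_sum_left (hq : ∀ a b c, 0 ≤ q a b c) (a : α) (b : β) :
    ∑ c, q a b c ≤ ∑ c, ∑ b', q a b' c :=
  sum_le_sum fun c _ ↦ (le_sum_marginals hq a b c).1

theorem sum_le_sum_sum_right (hq : ∀ a b c, 0 ≤ q a b c) (a : α) (b : β) :
    ∑ c, q a b c ≤ ∑ c, ∑ a', q a' b c :=
  sum_le_sum fun c _ ↦ (le_sum_marginals hq a b c).2.1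

theorem marginal_div_eq_of_isCondIndep (hq : ∀ a b c, 0 ≤ q a b c)
    (h₂ : IsCondIndep fun c a b ↦ q a b c) (h₃ : IsCondIndep fun c b a ↦ q a b c)
    {a : α} {b : β} (hab : ∑ c, q a b c ≠ 0) (c : γ) :
    (∑ b', q a b' c) / ∑ c', ∑ b', q a b' c' = (∑ a', q a' b c) / ∑ c', ∑ a', q a' b c' := by
  have hpos : 0 < ∑ c, q a b c := (sum_nonneg fun c _ ↦ hq a b c).lt_of_ne' hab
  rw [div_eq_div_iff (hpos.trans_le (sum_le_sum_sum_left hq a b)).ne'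
    (hpos.trans_le (sum_le_sum_sum_right hq a b)).ne']
  refine mul_left_cancel₀ hab ?_
  linear_combination (∑ c', ∑ b', q a b' c') * h₂ c a b - (∑ c', ∑ a', q a' b c') * h₃ c b a

theorem sum_eq_mul_of_marginal_div_eq (hq : ∀ a b c, 0 ≤ q a b c) (h₁ : IsCondIndep q)
    {a : α} {b : β} (h : ∀ c, (∑ b', q a b' c) / ∑ c', ∑ b', q a b' c' =
      (∑ a', q a' b c) / ∑ c', ∑ a', q a' b c') :
    ∑ c, q a b c = (∑ c, ∑ b', q a b' c) *
      ∑ c, (∑ a', q a' b c) ^ 2 / ((∑ c', ∑ a', q a' b c') * ∑ a', ∑ b', q a' b' c) := by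
  set pA := ∑ c, ∑ b', q a b' c
  set pB := ∑ c, ∑ a', q a' b c
  have hAB : 0 ≤ ∑ c, q a b c := sum_nonneg fun c _ ↦ hq a b c
  rcases eq_or_ne pA 0 with hA | hA
  · rw [hA, zero_mul]
    exact le_antisymm (hA ▸ sum_le_sum_sum_left hq a b) hAB
  rcases eq_or_ne pB 0 with hB | hB
  · simp only [hB, zero_mul, div_zero, sum_const_zero, mul_zero]
    exact le_antisymm (hB ▸ sum_le_sum_sum_right hq a b) hAB
  rw [mul_sum]
  refine sum_congr rfl fun c _ ↦ ?_
  obtain ⟨h₁', -, h₃'⟩ := le_sum_marginals hq a b c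
  rcases eq_or_ne (∑ a', ∑ b', q a' b' c) 0 with hC | hC
  · rw [hC, mul_zero, div_zero, mul_zero]
    exact le_antisymm (hC ▸ h₁'.trans h₃') (hq a b c)
  have hAC : ∑ b', q a b' c = pA * (∑ a', q a' b c) / pB := by
    rw [mul_div_assoc, ← h c, mul_div_cancel₀ _ hA]
  have hindep := h₁ a b c
  rw [hAC, div_mul_eq_mul_div, eq_div_iff hB] at hindep
  rw [← mul_div_assoc, eq_div_iff (mul_ne_zero hB hC)]
  linear_combination hindep

end Mass

section Measure

variable {α β γ : Type*} {μ : Measure Ω} {A : Ω → α} {B : Ω → β} {C : Ω → γ}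

theorem negMulLog_sum {ι : Type*} (s : Finset ι) (f : ι → ℝ) :
    negMulLog (∑ i ∈ s, f i) = -∑ i ∈ s, f i * log (∑ j ∈ s, f j) := by
  rw [negMulLog, neg_mul, sum_mul]

theorem ent_eq_sum [Fintype α] (μ : Measure Ω) (A : Ω → α) :
    ent μ A = ∑ a, negMulLog (μ.real (A ⁻¹' {a})) := by
  rw [ent, tsum_fintype]
  rfl

theorem preimage_pair_singleton {Ω : Type*} (A : Ω → α) (B : Ω → β) (a : α) (b : β) :
    pair A B ⁻¹' {(a, b)} = A ⁻¹' {a} ∩ B ⁻¹' {b} := by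
  ext ω
  simp [pair]

theorem DiscreteRV.comp [Finite α] (hA : DiscreteRV A) (g : α → β) : DiscreteRV (g ∘ A) := by
  intro b
  rw [Set.preimage_comp, ← Set.biUnion_preimage_singleton]
  exact MeasurableSet.biUnion (Set.to_countable _) fun a _ ↦ hA a

theorem sum_measureReal_preimage_inter [Fintype β] [IsFiniteMeasure μ] (hB : DiscreteRV B)
    (s : Set Ω) : ∑ b, μ.real (B ⁻¹' {b} ∩ s) = μ.real s := by
  simp_rw [← measureReal_restrict_apply (hB _)]
  rw [sum_measureReal_preimage_singleton _ fun b _ ↦ hB b]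
  simp

variable (μ) in
noncomputable def jointMass (A : Ω → α) (B : Ω → β) (C : Ω → γ) (a : α) (b : β) (c : γ) : ℝ :=
  μ.real (A ⁻¹' {a} ∩ B ⁻¹' {b} ∩ C ⁻¹' {c})

theorem jointMass_nonneg (a : α) (b : β) (c : γ) : 0 ≤ jointMass μ A B C a b c :=
  measureReal_nonneg

theorem jointMass_rotate : jointMass μ C A B = fun c a b ↦ jointMass μ A B C a b c := by
  funext c a b
  simp only [jointMass, Set.inter_comm, Set.inter_left_comm, Set.inter_assoc]

theorem jointMass_reverse : jointMass μ C B A = fun c b a ↦ jointMass μ A B C a b c := by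
  funext c b a
  simp only [jointMass, Set.inter_comm, Set.inter_assoc]

theorem jointMass_comp_left [DecidableEq γ] (g : α → γ) (a : α) (b : β) (c : γ) :
    jointMass μ A B (g ∘ A) a b c = if g a = c then μ.real (A ⁻¹' {a} ∩ B ⁻¹' {b}) else 0 := by
  unfold jointMass
  split_ifs with hc
  · congr 1
    ext ω
    simp +contextual [← hc]
  · convert measureReal_empty (μ := μ)
    ext ω
    simp +contextual [hc]

variable [IsFiniteMeasure μ]

theorem sum_jointMass_left [Fintype α] (hA : DiscreteRV A) (b : β) (c : γ) :
    ∑ a, jointMass μ A B C a b c = μ.real (B ⁻¹' {b} ∩ C ⁻¹' {c}) := by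
  simp_rw [jointMass, Set.inter_assoc]
  exact sum_measureReal_preimage_inter hA _

theorem sum_jointMass_mid [Fintype β] (hB : DiscreteRV B) (a : α) (c : γ) :
    ∑ b, jointMass μ A B C a b c = μ.real (A ⁻¹' {a} ∩ C ⁻¹' {c}) := by
  simp_rw [jointMass, Set.inter_right_comm _ (B ⁻¹' _), Set.inter_comm _ (B ⁻¹' _)]
  exact sum_measureReal_preimage_inter hB _

theorem sum_jointMass_right [Fintype γ] (hC : DiscreteRV C) (a : α) (b : β) :
    ∑ c, jointMass μ A B C a b c = μ.real (A ⁻¹' {a} ∩ B ⁻¹' {b}) := by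
  simp_rw [jointMass, Set.inter_comm _ (C ⁻¹' _)]
  exact sum_measureReal_preimage_inter hC _

theorem sum_sum_jointMass [Fintype α] [Fintype β] (hA : DiscreteRV A) (hB : DiscreteRV B)
    (c : γ) : ∑ a, ∑ b, jointMass μ A B C a b c = μ.real (C ⁻¹' {c}) := by
  simp_rw [sum_jointMass_mid hB]
  exact sum_measureReal_preimage_inter hA _

theorem cmi_eq_condMutualInfoOfMass [Fintype α] [Fintype β] [Fintype γ]
    (hA : DiscreteRV A) (hB : DiscreteRV B) :
    cmi μ A B C = condMutualInfoOfMass (jointMass μ A B C) := by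
  set q := jointMass μ A B C
  have hAC : ent μ (pair A C) = -∑ a, ∑ b, ∑ c, q a b c * log (∑ b', q a b' c) := by
    simp_rw [ent_eq_sum, Fintype.sum_prod_type, preimage_pair_singleton,
      ← sum_jointMass_mid hB, negMulLog_sum, sum_neg_distrib]
    exact congrArg Neg.neg (sum_congr rfl fun a _ ↦ sum_comm)
  have hBC : ent μ (pair B C) = -∑ a, ∑ b, ∑ c, q a b c * log (∑ a', q a' b c) := by
    simp_rw [ent_eq_sum, Fintype.sum_prod_type, preimage_pair_singleton,
      ← sum_jointMass_left hA, negMulLog_sum, sum_neg_distrib]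
    exact congrArg Neg.neg ((sum_congr rfl fun b _ ↦ sum_comm).trans sum_comm)
  have hABC : ent μ (pair (pair A B) C) = -∑ a, ∑ b, ∑ c, q a b c * log (q a b c) := by
    simp_rw [ent_eq_sum, Fintype.sum_prod_type, preimage_pair_singleton, negMulLog, neg_mul,
      sum_neg_distrib]
    rfl
  have hC : ent μ C = -∑ a, ∑ b, ∑ c, q a b c * log (∑ a', ∑ b', q a' b' c) := by
    simp_rw [ent_eq_sum, ← sum_sum_jointMass hA hB, negMulLog_sum, sum_mul, sum_neg_distrib]
    exact congrArg Neg.neg (sum_comm.trans (sum_congr rfl fun a _ ↦ sum_comm))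
  rw [cmi, hAC, hBC, hABC, hC, condMutualInfoOfMass]
  simp only [mul_add, mul_sub, sum_add_distrib, sum_sub_distrib]
  ring

theorem cmi_eq_zero_iff [Fintype α] [Fintype β] [Fintype γ]
    (hA : DiscreteRV A) (hB : DiscreteRV B) :
    cmi μ A B C = 0 ↔ IsCondIndep (jointMass μ A B C) := by
  rw [cmi_eq_condMutualInfoOfMass hA hB, condMutualInfoOfMass_eq_zero_iff jointMass_nonneg]

end Measure

section Components

variable {𝒳 𝒴 : Type*} {μ : Measure Ω} {X : Ω → 𝒳} {Y : Ω → 𝒴}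

instance : Std.Symm (edgeRel μ X Y) where
  symm := by
    rintro _ _ (⟨x, y, rfl, rfl, h⟩ | ⟨x, y, rfl, rfl, h⟩)
    exacts [Or.inr ⟨x, y, rfl, rfl, h⟩, Or.inl ⟨x, y, rfl, rfl, h⟩]

theorem quot_mk_inl_eq_inr_iff {x : 𝒳} {y : 𝒴} :
    Quot.mk (edgeRel μ X Y) (.inl x) = Quot.mk _ (.inr y) ↔ SameComponent μ X Y x y := by
  rw [Quot.eq, EqvGen.eqvGen_eq_reflTransGen, SameComponent]

theorem sameComponent_of_measureReal_ne_zero [IsFiniteMeasure μ] {x : 𝒳} {y : 𝒴}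
    (h : μ.real (X ⁻¹' {x} ∩ Y ⁻¹' {y}) ≠ 0) : SameComponent μ X Y x y :=
  .single (.inl ⟨x, y, rfl, rfl, fun h0 ↦ h (by rwa [measureReal_eq_zero_iff])⟩)

theorem _root_.Relation.ReflTransGen.eq_of_forall_rel {ι κ : Type*} {r : ι → ι → Prop} {f : ι → κ}
    (hf : ∀ i j, r i j → f i = f j) {i j : ι} (h : ReflTransGen r i j) : f i = f j := by
  simpa [reflTransGen_eq_self] using h.lift f hf

end Components

theorem exists_factorization_of_isTrivialPair {𝒳 𝒴 : Type*} [Fintype 𝒳] [Fintype 𝒴]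
    {μ : Measure Ω} [IsFiniteMeasure μ] {X : Ω → 𝒳} {Y : Ω → 𝒴}
    (hX : DiscreteRV X) (hY : DiscreteRV Y) (h : IsTrivialPair μ X Y) :
    ∃ (a : 𝒳 → ℝ) (b : 𝒴 → ℝ), (∀ x, 0 ≤ a x) ∧ (∀ y, 0 ≤ b y) ∧
      ∀ x y, SameComponent μ X Y x y → μ.real (X ⁻¹' {x} ∩ Y ⁻¹' {y}) = a x * b y := by
  obtain ⟨𝒵, _, Z, hZ, h₁, h₂, h₃⟩ := h
  set p := jointMass μ X Y Z
  have hp : ∀ x y z, 0 ≤ p x y z := jointMass_nonneg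
  rw [cmi_eq_zero_iff hX hY] at h₁
  rw [cmi_eq_zero_iff hZ hX, jointMass_rotate] at h₂
  rw [cmi_eq_zero_iff hZ hY, jointMass_reverse] at h₃
  let F : 𝒳 ⊕ 𝒴 → 𝒵 → ℝ := Sum.elim (fun x z ↦ (∑ y', p x y' z) / ∑ z', ∑ y', p x y' z')
    (fun y z ↦ (∑ x', p x' y z) / ∑ z', ∑ x', p x' y z')
  have hF : ∀ u v, edgeRel μ X Y u v → F u = F v := by
    have hne x y (hxy : μ {ω | X ω = x ∧ Y ω = y} ≠ 0) : ∑ z, p x y z ≠ 0 := by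
      rwa [sum_jointMass_right hZ, Ne, measureReal_eq_zero_iff]
    rintro _ _ (⟨x, y, rfl, rfl, hxy⟩ | ⟨x, y, rfl, rfl, hxy⟩) <;> funext z
    exacts [marginal_div_eq_of_isCondIndep hp h₂ h₃ (hne x y hxy) z,
      (marginal_div_eq_of_isCondIndep hp h₂ h₃ (hne x y hxy) z).symm]
  refine ⟨fun x ↦ ∑ z, ∑ y', p x y' z,
    fun y ↦ ∑ z, (∑ x', p x' y z) ^ 2 / ((∑ z', ∑ x', p x' y z') * ∑ x', ∑ y', p x' y' z),
    fun x ↦ sum_nonneg fun z _ ↦ sum_nonneg fun y _ ↦ hp x y z,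
    fun y ↦ sum_nonneg fun z _ ↦ div_nonneg (sq_nonneg _) (mul_nonneg
      (sum_nonneg fun _ _ ↦ sum_nonneg fun _ _ ↦ hp _ _ _)
      (sum_nonneg fun _ _ ↦ sum_nonneg fun _ _ ↦ hp _ _ _)),
    fun x y hxy ↦ ?_⟩
  rw [← sum_jointMass_right hZ]
  exact sum_eq_mul_of_marginal_div_eq hp h₁ (congrFun (hxy.eq_of_forall_rel hF))

theorem isTrivialPair_of_factorization {𝒳 𝒴 : Type} [Fintype 𝒳] [Fintype 𝒴]
    {μ : Measure Ω} [IsFiniteMeasure μ] {X : Ω → 𝒳} {Y : Ω → 𝒴}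
    (hX : DiscreteRV X) (hY : DiscreteRV Y) (a : 𝒳 → ℝ) (b : 𝒴 → ℝ)
    (h : ∀ x y, SameComponent μ X Y x y → μ.real (X ⁻¹' {x} ∩ Y ⁻¹' {y}) = a x * b y) :
    IsTrivialPair μ X Y := by
  classical
  let cls : 𝒳 ⊕ 𝒴 → Quot (edgeRel μ X Y) := Quot.mk _
  have hP x y : μ.real (X ⁻¹' {x} ∩ Y ⁻¹' {y}) =
      if cls (.inl x) = cls (.inr y) then a x * b y else 0 := by
    rw [quot_mk_inl_eq_inr_iff]
    split_ifs with hxy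
    · exact h x y hxy
    · by_contra hne
      exact hxy (sameComponent_of_measureReal_ne_zero hne)
  let g : 𝒳 → Quot (edgeRel μ X Y) := fun x ↦ cls (.inl x)
  have hp x y z : jointMass μ X Y (g ∘ X) x y z =
      if cls (.inl x) = z ∧ cls (.inr y) = z then a x * b y else 0 := by
    rw [jointMass_comp_left, hP]
    split_ifs <;> simp_all [g]
  have hZ : DiscreteRV (g ∘ X) := hX.comp g
  let : Fintype (Quot (edgeRel μ X Y)) := Fintype.ofFinite _
  refine ⟨_, this, g ∘ X, hZ, ?_, ?_, ?_⟩
  · rw [cmi_eq_zero_iff hX hY]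
    exact isCondIndep_of_eq_mul (fun x z ↦ if cls (.inl x) = z then a x else 0)
      (fun y z ↦ if cls (.inr y) = z then b y else 0) fun x y z ↦ by
        rw [hp]; split_ifs <;> simp_all
  · rw [cmi_eq_zero_iff hZ hX, jointMass_rotate]
    exact isCondIndep_of_eq_mul (fun z y ↦ if cls (.inr y) = z then 1 else 0)
      (fun x y ↦ if cls (.inl x) = cls (.inr y) then a x * b y else 0) fun z x y ↦ by
        rw [hp]; split_ifs <;> simp_all
  · rw [cmi_eq_zero_iff hZ hY, jointMass_reverse]
    exact isCondIndep_of_eq_mul (fun z x ↦ if cls (.inl x) = z then 1 else 0)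
      (fun y x ↦ if cls (.inl x) = cls (.inr y) then a x * b y else 0) fun z y x ↦ by
        rw [hp]; split_ifs <;> simp_all

theorem stmt11_general {Ω : Type*} [MeasurableSpace Ω] (μ : Measure Ω) [IsProbabilityMeasure μ]
    {𝒳 𝒴 : Type} [Fintype 𝒳] [Fintype 𝒴]
    (X : Ω → 𝒳) (Y : Ω → 𝒴) (hX : DiscreteRV X) (hY : DiscreteRV Y) :
    IsTrivialPair μ X Y ↔
      ∃ (a : 𝒳 → ℝ) (b : 𝒴 → ℝ), (∀ x, 0 ≤ a x) ∧ (∀ y, 0 ≤ b y) ∧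
        ∀ (x : 𝒳) (y : 𝒴), SameComponent μ X Y x y →
          (μ {ω | X ω = x ∧ Y ω = y}).toReal = a x * b y :=
  ⟨exists_factorization_of_isTrivialPair hX hY,
    fun ⟨a, b, _, _, h⟩ ↦ isTrivialPair_of_factorization hX hY a b h⟩

/-- The pair `(X,Y)` is trivial if and only if the joint probability masses factor as
`P({(x,y)}) = a(x)·b(y)` for all `x, y` in the same connected component. -/
theorem stmt11 {Ω : Type*} [MeasurableSpace Ω] (μ : Measure Ω) [IsProbabilityMeasure μ]
    {𝒳 𝒴 : Type} [Fintype 𝒳] [Fintype 𝒴] [Nonempty 𝒳] [Nonempty 𝒴]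
    (X : Ω → 𝒳) (Y : Ω → 𝒴) (hX : DiscreteRV X) (hY : DiscreteRV Y) :
    IsTrivialPair μ X Y ↔
      ∃ (a : 𝒳 → ℝ) (b : 𝒴 → ℝ), (∀ x, 0 ≤ a x) ∧ (∀ y, 0 ≤ b y) ∧
        ∀ (x : 𝒳) (y : 𝒴), SameComponent μ X Y x y →
          (μ {ω | X ω = x ∧ Y ω = y}).toReal = a x * b y :=
  stmt11_general μ X Y hX hY

end SecureComputation
end

section
/- Let κ be a primitive from 𝒜 × ℬ to 𝒰 × 𝒱 that fails the completeness condition. Let à and B̃ be independent random variables on a probability space with values in 𝒜 and ℬ (with arbitrary marginal distributions), and let (Ũ,Ṽ) be generated by one use of κ with inputs (Ã,B̃) and constant side information. Then the pair (⟨Ã,Ũ⟩, ⟨B̃,Ṽ⟩) is trivial. -/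
open MeasureTheory Real
open scoped ENNReal

namespace SecureComputation

variable {Ω : Type*} [MeasurableSpace Ω]

/-- `(U,V)` is generated by one use of the primitive `κ` with inputs `(A,B)` and
side information `T`. -/
def GeneratedBy {𝒜 ℬ 𝒰 𝒱 𝒯 : Type*} (μ : Measure Ω) (κ : 𝒜 × ℬ → PMF (𝒰 × 𝒱))
    (A : Ω → 𝒜) (B : Ω → ℬ) (U : Ω → 𝒰) (V : Ω → 𝒱) (T : Ω → 𝒯) : Prop :=
  ∀ (t : 𝒯) (a : 𝒜) (b : ℬ) (u : 𝒰) (v : 𝒱),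
    μ {ω | T ω = t ∧ A ω = a ∧ B ω = b ∧ U ω = u ∧ V ω = v} =
      μ {ω | T ω = t ∧ A ω = a ∧ B ω = b} * κ (a, b) (u, v)

/-- The primitive `κ` fails the completeness condition: whenever its inputs are
independent and uniformly distributed and `(U,V)` is generated by one use of `κ`
(with constant side information), the pair `(⟨A,U⟩, ⟨B,V⟩)` is trivial. -/
def FailsCompleteness {𝒜 ℬ 𝒰 𝒱 : Type} (κ : 𝒜 × ℬ → PMF (𝒰 × 𝒱)) : Prop :=
  ∀ (Ω' : Type) (_ : MeasurableSpace Ω') (μ : Measure Ω'), IsProbabilityMeasure μ →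
    ∀ (A : Ω' → 𝒜) (B : Ω' → ℬ) (U : Ω' → 𝒰) (V : Ω' → 𝒱),
      DiscreteRV A → DiscreteRV B → DiscreteRV U → DiscreteRV V →
      (∀ (a : 𝒜) (b : ℬ), μ {ω | A ω = a ∧ B ω = b} =
        ((Nat.card 𝒜 : ℝ≥0∞) * (Nat.card ℬ : ℝ≥0∞))⁻¹) →
      GeneratedBy μ κ A B U V (fun _ => ()) →
      IsTrivialPair μ (pair A U) (pair B V)

/-!
Put `X = ⟨A,U⟩`, `Y = ⟨B,V⟩` and let `S = ((A,B),(U,V))` be the transcript. Running `κ` on uniform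
inputs on the transcript space itself makes the `Z` supplied by the failure of completeness a
function of the transcript, so `Z ∘ S` is a candidate witness on the original space.

By Gibbs' inequality (`b * klFun (m / b) ≥ 0`), `I[X;Y|Z] = 0` iff every slice `P(·,·,z)` of the
joint law is the product of its marginals over its mass, i.e. has rank at most one. With
independent inputs the law of `S` is the uniform-input law times `|𝒜| |ℬ| p_A(a) p_B(b)`, a
function of `X` times a function of `Y`. Multiplying a nonnegative law by a product of functions
of its three coordinates keeps every slice of rank at most one, so the three conditional mutual
informations still vanish.
-/

open Finset InformationTheory

lemma mul_klFun_div_eq_zero_iff {m b : ℝ} (hm : 0 ≤ m) (hb : 0 ≤ b) :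
    b * klFun (m / b) = 0 ↔ b = 0 ∨ m = b := by
  rcases hb.eq_or_lt with rfl | hb
  · simp
  rw [mul_eq_zero, klFun_eq_zero_iff (div_nonneg hm hb.le), div_eq_one_iff_eq hb.ne']

lemma mul_log_sub_log_eq_mul_klFun {m r c σ : ℝ} (hm : 0 ≤ m) (hr : m ≤ r) (hc : m ≤ c)
    (hσ : r ≤ σ) :
    m * (log m - log r - log c + log σ) = r * c / σ * klFun (m / (r * c / σ)) + m - r * c / σ := by
  rcases hm.eq_or_lt with rfl | hm
  · simp [klFun_zero]
  have hr0 : 0 < r := hm.trans_le hr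
  have hc0 : 0 < c := hm.trans_le hc
  have hσ0 : 0 < σ := hr0.trans_le hσ
  have hb : 0 < r * c / σ := by positivity
  rw [klFun_apply, log_div hm.ne' hb.ne', log_div (by positivity) hσ0.ne', log_mul hr0.ne' hc0.ne']
  field_simp
  ring

lemma mul_klFun_div_eq_zero_iff_mul_eq {m r c σ : ℝ} (hm : 0 ≤ m) (hr : m ≤ r) (hc : m ≤ c)
    (hσ : r ≤ σ) : r * c / σ * klFun (m / (r * c / σ)) = 0 ↔ m * σ = r * c := by
  have hr0 : 0 ≤ r := hm.trans hr
  have hc0 : 0 ≤ c := hm.trans hc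
  have hσ0 : 0 ≤ σ := hr0.trans hσ
  rcases hσ0.eq_or_lt with rfl | hσ0
  · obtain rfl : r = 0 := le_antisymm hσ hr0
    obtain rfl : m = 0 := le_antisymm hr hm
    simp
  rw [mul_klFun_div_eq_zero_iff hm (by positivity), div_eq_zero_iff, eq_div_iff hσ0.ne']
  refine ⟨?_, Or.inr⟩
  rintro ((hrc | hσ0') | h)
  · obtain rfl : m = 0 := by nlinarith [mul_le_mul hr hc hm hr0]
    simp [hrc]
  · exact absurd hσ0' hσ0.ne'
  · exact h

section IndepLaw

variable {𝒳 𝒴 : Type*} [Fintype 𝒳] [Fintype 𝒴]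

def IsIndepLaw (M : 𝒳 → 𝒴 → ℝ) : Prop :=
  ∀ x y, M x y * ∑ x', ∑ y', M x' y' = (∑ y', M x y') * ∑ x', M x' y

noncomputable def miOfLaw (M : 𝒳 → 𝒴 → ℝ) : ℝ :=
  ∑ x, negMulLog (∑ y, M x y) + ∑ y, negMulLog (∑ x, M x y) - ∑ x, ∑ y, negMulLog (M x y)
    - negMulLog (∑ x, ∑ y, M x y)

noncomputable def marginalProduct (M : 𝒳 → 𝒴 → ℝ) (x : 𝒳) (y : 𝒴) : ℝ :=
  (∑ y', M x y') * (∑ x', M x' y) / ∑ x', ∑ y', M x' y'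

lemma isIndepLaw_of_eq_mul {M : 𝒳 → 𝒴 → ℝ} {φ : 𝒳 → ℝ} {ψ : 𝒴 → ℝ}
    (h : ∀ x y, M x y = φ x * ψ y) : IsIndepLaw M := by
  intro x y
  simp only [h, ← mul_sum, ← sum_mul]
  ring

lemma IsIndepLaw.exists_eq_mul {M : 𝒳 → 𝒴 → ℝ} (hM : ∀ x y, 0 ≤ M x y) (h : IsIndepLaw M) :
    ∃ (φ : 𝒳 → ℝ) (ψ : 𝒴 → ℝ), ∀ x y, M x y = φ x * ψ y := by
  refine ⟨fun x => (∑ y', M x y') / ∑ x', ∑ y', M x' y', fun y => ∑ x', M x' y, fun x y => ?_⟩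
  by_cases hσ : ∑ x', ∑ y', M x' y' = 0
  -- zero total mass forces `M = 0`, and `φ = 0` by division by zero
  · rw [Fintype.sum_eq_zero_iff_of_nonneg fun x' => sum_nonneg fun y' _ => hM x' y'] at hσ
    have hM0 : M x y = 0 :=
      congrFun ((Fintype.sum_eq_zero_iff_of_nonneg (hM x)).1 (congrFun hσ x)) y
    simp [hσ, hM0]
  · rw [div_mul_eq_mul_div, eq_div_iff hσ, h x y]

lemma IsIndepLaw.mul {M : 𝒳 → 𝒴 → ℝ} (hM : ∀ x y, 0 ≤ M x y) (h : IsIndepLaw M)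
    (f : 𝒳 → ℝ) (g : 𝒴 → ℝ) : IsIndepLaw fun x y => f x * g y * M x y := by
  obtain ⟨φ, ψ, hφψ⟩ := h.exists_eq_mul hM
  exact isIndepLaw_of_eq_mul (φ := fun x => f x * φ x) (ψ := fun y => g y * ψ y)
    fun x y => by rw [hφψ]; ring

lemma marginalProduct_nonneg {M : 𝒳 → 𝒴 → ℝ} (hM : ∀ x y, 0 ≤ M x y) (x : 𝒳) (y : 𝒴) :
    0 ≤ marginalProduct M x y :=
  div_nonneg (mul_nonneg (sum_nonneg fun y' _ => hM x y') (sum_nonneg fun x' _ => hM x' y))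
    (sum_nonneg fun x' _ => sum_nonneg fun y' _ => hM x' y')

section

variable {M : 𝒳 → 𝒴 → ℝ} (hM : ∀ x y, 0 ≤ M x y)
include hM

lemma miOfLaw_eq_sum_mul_klFun :
    miOfLaw M = ∑ x, ∑ y, marginalProduct M x y * klFun (M x y / marginalProduct M x y) := by
  set r : 𝒳 → ℝ := fun x => ∑ y', M x y'
  set c : 𝒴 → ℝ := fun y => ∑ x', M x' y
  set σ : ℝ := ∑ x', ∑ y', M x' y'
  have hrσ : ∑ x, r x = σ := rfl
  have hcσ : ∑ y, c y = σ := sum_comm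
  show miOfLaw M = ∑ x, ∑ y, r x * c y / σ * klFun (M x y / (r x * c y / σ))
  have hmi : miOfLaw M = ∑ x, ∑ y, M x y * (log (M x y) - log (r x) - log (c y) + log σ) := by
    simp only [miOfLaw, negMulLog, r, c, σ, mul_add, mul_sub, sum_add_distrib, sum_sub_distrib,
      ← sum_mul, neg_mul, sum_neg_distrib]
    rw [sum_comm (f := fun x y => M x y * log (∑ x', M x' y))]
    simp only [← sum_mul]
    ring
  have hsum : ∑ x, ∑ y, r x * c y / σ = σ := by
    simp only [← sum_div, ← mul_sum, ← sum_mul, hrσ, hcσ, mul_self_div_self]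
  calc miOfLaw M = ∑ x, ∑ y, (r x * c y / σ * klFun (M x y / (r x * c y / σ)) + M x y
        - r x * c y / σ) := by
        rw [hmi]
        exact sum_congr rfl fun x _ => sum_congr rfl fun y _ =>
          mul_log_sub_log_eq_mul_klFun (hM x y)
          (single_le_sum (fun y' _ => hM x y') (mem_univ y))
          (single_le_sum (fun x' _ => hM x' y) (mem_univ x))
          (single_le_sum (fun x' _ => sum_nonneg fun y' _ => hM x' y') (mem_univ x))
    _ = _ := by simp only [sum_add_distrib, sum_sub_distrib, hsum]; ring

lemma miOfLaw_nonneg : 0 ≤ miOfLaw M := by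
  rw [miOfLaw_eq_sum_mul_klFun hM]
  exact sum_nonneg fun x _ => sum_nonneg fun y _ => mul_nonneg (marginalProduct_nonneg hM x y)
    (klFun_nonneg (div_nonneg (hM x y) (marginalProduct_nonneg hM x y)))

lemma miOfLaw_eq_zero_iff : miOfLaw M = 0 ↔ IsIndepLaw M := by
  rw [miOfLaw_eq_sum_mul_klFun hM, ← Fintype.sum_prod_type',
    Fintype.sum_eq_zero_iff_of_nonneg fun p => mul_nonneg (marginalProduct_nonneg hM p.1 p.2)
      (klFun_nonneg (div_nonneg (hM p.1 p.2) (marginalProduct_nonneg hM p.1 p.2)))]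
  simp only [funext_iff, Prod.forall, Pi.zero_apply]
  exact forall₂_congr fun x y => mul_klFun_div_eq_zero_iff_mul_eq (hM x y)
    (single_le_sum (fun y' _ => hM x y') (mem_univ y))
    (single_le_sum (fun x' _ => hM x' y) (mem_univ x))
    (single_le_sum (fun x' _ => sum_nonneg fun y' _ => hM x' y') (mem_univ x))

end

end IndepLaw

section CondIndepLaw

variable {𝒳 𝒴 𝒵 : Type*} [Fintype 𝒳] [Fintype 𝒴] [Fintype 𝒵]

noncomputable def cmiOfLaw (P : 𝒳 → 𝒴 → 𝒵 → ℝ) : ℝ := ∑ z, miOfLaw fun x y => P x y z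

lemma cmiOfLaw_eq_zero_iff {P : 𝒳 → 𝒴 → 𝒵 → ℝ} (hP : ∀ x y z, 0 ≤ P x y z) :
    cmiOfLaw P = 0 ↔ ∀ z, IsIndepLaw fun x y => P x y z := by
  rw [cmiOfLaw, Fintype.sum_eq_zero_iff_of_nonneg fun z => miOfLaw_nonneg fun x y => hP x y z]
  simp only [funext_iff, Pi.zero_apply, miOfLaw_eq_zero_iff fun x y => hP x y _]

end CondIndepLaw

section JointLaw

variable {𝒮 𝒳 𝒴 𝒵 : Type*} [Fintype 𝒮] [DecidableEq 𝒳] [DecidableEq 𝒴] [DecidableEq 𝒵]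

def jointLaw (p : 𝒮 → ℝ) (a : 𝒮 → 𝒳) (b : 𝒮 → 𝒴) (c : 𝒮 → 𝒵) (x : 𝒳) (y : 𝒴) (z : 𝒵) : ℝ :=
  ∑ s, if a s = x ∧ b s = y ∧ c s = z then p s else 0

lemma jointLaw_nonneg {p : 𝒮 → ℝ} (hp : ∀ s, 0 ≤ p s) (a : 𝒮 → 𝒳) (b : 𝒮 → 𝒴) (c : 𝒮 → 𝒵)
    (x : 𝒳) (y : 𝒴) (z : 𝒵) : 0 ≤ jointLaw p a b c x y z :=
  sum_nonneg fun s _ => ite_nonneg (hp s) le_rfl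

lemma jointLaw_mul (p : 𝒮 → ℝ) (a : 𝒮 → 𝒳) (b : 𝒮 → 𝒴) (c : 𝒮 → 𝒵) (f : 𝒳 → ℝ) (g : 𝒴 → ℝ)
    (h : 𝒵 → ℝ) (x : 𝒳) (y : 𝒴) (z : 𝒵) :
    jointLaw (fun s => f (a s) * g (b s) * h (c s) * p s) a b c x y z =
      f x * g y * h z * jointLaw p a b c x y z := by
  rw [jointLaw, jointLaw, mul_sum]
  refine sum_congr rfl fun s _ => ?_
  split_ifs with hs
  · obtain ⟨rfl, rfl, rfl⟩ := hs
    rfl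
  · rw [mul_zero]

end JointLaw

lemma DiscreteRV.comp_s12 {𝒮 𝒯 : Type*} [Countable 𝒮] {S : Ω → 𝒮} (hS : DiscreteRV S) (g : 𝒮 → 𝒯) :
    DiscreteRV (g ∘ S) := fun t => by
  rw [Set.preimage_comp, ← Set.biUnion_preimage_singleton]
  exact .biUnion (Set.to_countable _) fun s _ => hS s

lemma DiscreteRV.prodMk {𝒳 𝒴 : Type*} {X : Ω → 𝒳} {Y : Ω → 𝒴} (hX : DiscreteRV X)
    (hY : DiscreteRV Y) : DiscreteRV (pair X Y) := fun p => by
  rw [show pair X Y ⁻¹' {p} = X ⁻¹' {p.1} ∩ Y ⁻¹' {p.2} by ext; simp [pair, Prod.ext_iff]]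
  exact (hX _).inter (hY _)

section Pushforward

variable {𝒮 𝒳 𝒴 𝒵 : Type*} [Fintype 𝒮] [Fintype 𝒳] [Fintype 𝒴] [Fintype 𝒵]
  [DecidableEq 𝒳] [DecidableEq 𝒴] [DecidableEq 𝒵]
  (μ : Measure Ω) [IsFiniteMeasure μ] {S : Ω → 𝒮} (hS : DiscreteRV S)
include hS

lemma measureReal_comp_preimage_singleton {𝒯 : Type*} [DecidableEq 𝒯] (g : 𝒮 → 𝒯) (t : 𝒯) :
    μ.real ((g ∘ S) ⁻¹' {t}) = ∑ s, if g s = t then μ.real (S ⁻¹' {s}) else 0 := by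
  rw [← sum_filter, sum_measureReal_preimage_singleton _ fun s _ => hS s, Set.preimage_comp]
  congr
  ext
  simp

lemma ent_comp {𝒯 : Type*} [Fintype 𝒯] [DecidableEq 𝒯] (g : 𝒮 → 𝒯) :
    ent μ (g ∘ S) = ∑ t, negMulLog (∑ s, if g s = t then μ.real (S ⁻¹' {s}) else 0) := by
  simp only [ent, tsum_fintype, ← measureReal_def, measureReal_comp_preimage_singleton μ hS]

lemma cmi_comp (a : 𝒮 → 𝒳) (b : 𝒮 → 𝒴) (c : 𝒮 → 𝒵) :
    cmi μ (a ∘ S) (b ∘ S) (c ∘ S) = cmiOfLaw (jointLaw (fun s => μ.real (S ⁻¹' {s})) a b c) := by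
  have hXZ : ent μ (pair (a ∘ S) (c ∘ S)) = ∑ z, ∑ x, negMulLog (∑ y,
      jointLaw (fun s => μ.real (S ⁻¹' {s})) a b c x y z) := by
    rw [show pair (a ∘ S) (c ∘ S) = (fun s => (a s, c s)) ∘ S from rfl, ent_comp μ hS,
      Fintype.sum_prod_type_right]
    simp [jointLaw, Finset.sum_comm (γ := 𝒴), ite_and, Prod.ext_iff]
  have hYZ : ent μ (pair (b ∘ S) (c ∘ S)) = ∑ z, ∑ y, negMulLog (∑ x,
      jointLaw (fun s => μ.real (S ⁻¹' {s})) a b c x y z) := by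
    rw [show pair (b ∘ S) (c ∘ S) = (fun s => (b s, c s)) ∘ S from rfl, ent_comp μ hS,
      Fintype.sum_prod_type_right]
    simp [jointLaw, Finset.sum_comm (γ := 𝒳), ite_and, Prod.ext_iff]
  have hXYZ : ent μ (pair (pair (a ∘ S) (b ∘ S)) (c ∘ S)) = ∑ z, ∑ x, ∑ y, negMulLog
      (jointLaw (fun s => μ.real (S ⁻¹' {s})) a b c x y z) := by
    rw [show pair (pair (a ∘ S) (b ∘ S)) (c ∘ S) = (fun s => ((a s, b s), c s)) ∘ S from rfl,
      ent_comp μ hS, Fintype.sum_prod_type_right]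
    simp [jointLaw, Fintype.sum_prod_type, Prod.ext_iff, and_assoc]
  have hZ : ent μ (c ∘ S) = ∑ z, negMulLog (∑ x, ∑ y,
      jointLaw (fun s => μ.real (S ⁻¹' {s})) a b c x y z) := by
    rw [ent_comp μ hS]
    simp [jointLaw, Finset.sum_comm (γ := 𝒳), Finset.sum_comm (γ := 𝒴), ite_and]
  simp only [cmi, cmiOfLaw, miOfLaw, hXZ, hYZ, hXYZ, hZ, sum_add_distrib, sum_sub_distrib]

lemma cmi_comp_eq_zero_of_law_eq_mul {Ω' : Type*} [MeasurableSpace Ω'] {μ' : Measure Ω'}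
    [IsFiniteMeasure μ'] {S' : Ω' → 𝒮} (hS' : DiscreteRV S') (a : 𝒮 → 𝒳) (b : 𝒮 → 𝒴)
    (c : 𝒮 → 𝒵) {f : 𝒳 → ℝ} {g : 𝒴 → ℝ} {h : 𝒵 → ℝ}
    (hlaw : ∀ s, μ.real (S ⁻¹' {s}) = f (a s) * g (b s) * h (c s) * μ'.real (S' ⁻¹' {s}))
    (h0 : cmi μ' (a ∘ S') (b ∘ S') (c ∘ S') = 0) : cmi μ (a ∘ S) (b ∘ S) (c ∘ S) = 0 := by
  have hP' := jointLaw_nonneg (fun s => measureReal_nonneg (μ := μ') (s := S' ⁻¹' {s})) a b c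
  rw [cmi_comp μ' hS', cmiOfLaw_eq_zero_iff hP'] at h0
  rw [cmi_comp μ hS, cmiOfLaw_eq_zero_iff (jointLaw_nonneg (fun _ => measureReal_nonneg) a b c)]
  simp only [hlaw, jointLaw_mul]
  intro z
  convert (h0 z).mul (fun x y => hP' x y z) (fun x => f x * h z) g using 3 with x y
  ring

end Pushforward

section Model

variable {𝒜 ℬ 𝒰 𝒱 : Type*} (κ : 𝒜 × ℬ → PMF (𝒰 × 𝒱))

lemma generatedBy_const_iff {μ : Measure Ω} {A : Ω → 𝒜} {B : Ω → ℬ} {U : Ω → 𝒰} {V : Ω → 𝒱} :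
    GeneratedBy μ κ A B U V (fun _ => ()) ↔ ∀ s, μ (pair (pair A B) (pair U V) ⁻¹' {s}) =
      μ {ω | A ω = s.1.1 ∧ B ω = s.1.2} * κ s.1 s.2 := by
  simp only [GeneratedBy, true_and, forall_const, Prod.forall]
  refine forall₄_congr fun a b u v => ?_
  rw [show pair (pair A B) (pair U V) ⁻¹' {((a, b), u, v)} =
    {ω | A ω = a ∧ B ω = b ∧ U ω = u ∧ V ω = v} by ext; simp [pair, and_assoc]]

lemma exists_uniform_input_model [Fintype 𝒜] [Fintype ℬ] [Fintype 𝒰] [Fintype 𝒱] [Nonempty 𝒜]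
    [Nonempty ℬ] :
    ∃ (_ : MeasurableSpace ((𝒜 × ℬ) × (𝒰 × 𝒱))) (μ : Measure ((𝒜 × ℬ) × (𝒰 × 𝒱))),
      IsProbabilityMeasure μ ∧ DiscreteRV (id : (𝒜 × ℬ) × (𝒰 × 𝒱) → _) ∧
      (∀ a b, μ {s | s.1.1 = a ∧ s.1.2 = b} = ((Nat.card 𝒜 : ℝ≥0∞) * Nat.card ℬ)⁻¹) ∧
      GeneratedBy μ κ (·.1.1) (·.1.2) (·.2.1) (·.2.2) (fun _ => ()) ∧
      ∀ s, μ {s} = ((Nat.card 𝒜 : ℝ≥0∞) * Nat.card ℬ)⁻¹ * κ s.1 s.2 := by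
  classical
  set c : ℝ≥0∞ := ((Nat.card 𝒜 : ℝ≥0∞) * Nat.card ℬ)⁻¹
  have hκ : ∀ ab, ∑ uv, κ ab uv = 1 := fun ab => by
    rw [← tsum_fintype (L := .unconditional _), (κ ab).tsum_coe]
  have hc : ∑ _ab : 𝒜 × ℬ, c = 1 := by
    rw [sum_const, card_univ, nsmul_eq_mul, Fintype.card_prod, Nat.cast_mul,
      ← Nat.card_eq_fintype_card, ← Nat.card_eq_fintype_card]
    exact ENNReal.mul_inv_cancel (by simp) (by simp [ENNReal.mul_eq_top])
  let p := PMF.ofFintype (fun s : (𝒜 × ℬ) × (𝒰 × 𝒱) => c * κ s.1 s.2) (by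
    rw [Fintype.sum_prod_type]; simp only [← mul_sum, hκ, mul_one]; exact hc)
  let : MeasurableSpace ((𝒜 × ℬ) × (𝒰 × 𝒱)) := ⊤
  have hunif : ∀ a b, p.toMeasure {s | s.1.1 = a ∧ s.1.2 = b} = c := fun a b => by
    rw [PMF.toMeasure_apply_fintype, Fintype.sum_prod_type, sum_eq_single (a, b)]
    · simp [p, ← mul_sum, hκ]
    · intro ab _ hab
      refine sum_eq_zero fun uv _ => Set.indicator_of_notMem ?_ _
      exact fun h => hab (Prod.ext h.1 h.2)
    · simp
  have hpoint : ∀ s, p.toMeasure {s} = c * κ s.1 s.2 := fun s =>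
    PMF.toMeasure_apply_singleton p s trivial
  refine ⟨⊤, p.toMeasure, inferInstance, fun _ => trivial, hunif,
    (generatedBy_const_iff κ).2 fun s => ?_, hpoint⟩
  rw [hunif]
  exact hpoint s

end Model

theorem stmt12_general {Ω : Type*} [MeasurableSpace Ω] (μ : Measure Ω) [IsProbabilityMeasure μ]
    {𝒜 ℬ 𝒰 𝒱 : Type} [Fintype 𝒜] [Fintype ℬ] [Fintype 𝒰] [Fintype 𝒱]
    [Nonempty 𝒜] [Nonempty ℬ]
    (κ : 𝒜 × ℬ → PMF (𝒰 × 𝒱)) (hκ : FailsCompleteness κ)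
    (A : Ω → 𝒜) (B : Ω → ℬ) (U : Ω → 𝒰) (V : Ω → 𝒱)
    (hA : DiscreteRV A) (hB : DiscreteRV B) (hU : DiscreteRV U) (hV : DiscreteRV V)
    (hindep : ∀ (a : 𝒜) (b : ℬ),
      μ {ω | A ω = a ∧ B ω = b} = μ {ω | A ω = a} * μ {ω | B ω = b})
    (hgen : GeneratedBy μ κ A B U V (fun _ => ())) :
    IsTrivialPair μ (pair A U) (pair B V) := by
  classical
  obtain ⟨_, μ', _, hid, hunif, hgen', hμ'⟩ := exists_uniform_input_model κ
  obtain ⟨𝒵, _, Z, -, hXY, hZX, hZY⟩ := hκ _ _ μ' ‹_› _ _ _ _ (hid.comp_s12 (·.1.1))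
    (hid.comp_s12 (·.1.2)) (hid.comp_s12 (·.2.1)) (hid.comp_s12 (·.2.2)) hunif hgen'
  set c : ℝ≥0∞ := ((Nat.card 𝒜 : ℝ≥0∞) * Nat.card ℬ)⁻¹
  have hc : c.toReal ≠ 0 := ENNReal.toReal_ne_zero.2 ⟨by simp [c, ENNReal.mul_eq_top], by simp [c]⟩
  set wA : 𝒜 × 𝒰 → ℝ := fun x => μ.real {ω | A ω = x.1} / c.toReal
  set wB : ℬ × 𝒱 → ℝ := fun y => μ.real {ω | B ω = y.1}
  have hlaw : ∀ s, μ.real (pair (pair A B) (pair U V) ⁻¹' {s}) =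
      wA (s.1.1, s.2.1) * wB (s.1.2, s.2.2) * μ'.real (id ⁻¹' {s}) := fun s => by
    simp only [wA, wB, measureReal_def, (generatedBy_const_iff κ).1 hgen s, hindep, Set.preimage_id,
      hμ', ENNReal.toReal_mul]
    field_simp
  have hS : DiscreteRV (pair (pair A B) (pair U V)) := (hA.prodMk hB).prodMk (hU.prodMk hV)
  refine ⟨𝒵, ‹_›, Z ∘ pair (pair A B) (pair U V), hS.comp_s12 Z, ?_, ?_, ?_⟩
  · exact cmi_comp_eq_zero_of_law_eq_mul μ hS hid (fun s => (s.1.1, s.2.1))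
      (fun s => (s.1.2, s.2.2)) Z (f := wA) (g := wB) (h := fun _ => 1)
      (fun s => (hlaw s).trans (by ring)) hXY
  · exact cmi_comp_eq_zero_of_law_eq_mul μ hS hid Z (fun s => (s.1.1, s.2.1))
      (fun s => (s.1.2, s.2.2)) (f := fun _ => 1) (g := wA) (h := wB)
      (fun s => (hlaw s).trans (by ring)) hZX
  · exact cmi_comp_eq_zero_of_law_eq_mul μ hS hid Z (fun s => (s.1.2, s.2.2))
      (fun s => (s.1.1, s.2.1)) (f := fun _ => 1) (g := wB) (h := wA)
      (fun s => (hlaw s).trans (by ring)) hZY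

/-- If a primitive `κ` fails the completeness condition, `Ã` and `B̃` are independent
(with arbitrary marginals), and `(Ũ,Ṽ)` is generated by one use of `κ` with inputs
`(Ã,B̃)` and constant side information, then the pair `(⟨Ã,Ũ⟩, ⟨B̃,Ṽ⟩)` is trivial. -/
theorem stmt12 {Ω : Type*} [MeasurableSpace Ω] (μ : Measure Ω) [IsProbabilityMeasure μ]
    {𝒜 ℬ 𝒰 𝒱 : Type} [Fintype 𝒜] [Fintype ℬ] [Fintype 𝒰] [Fintype 𝒱]
    [Nonempty 𝒜] [Nonempty ℬ] [Nonempty 𝒰] [Nonempty 𝒱]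
    (κ : 𝒜 × ℬ → PMF (𝒰 × 𝒱)) (hκ : FailsCompleteness κ)
    (A : Ω → 𝒜) (B : Ω → ℬ) (U : Ω → 𝒰) (V : Ω → 𝒱)
    (hA : DiscreteRV A) (hB : DiscreteRV B) (hU : DiscreteRV U) (hV : DiscreteRV V)
    (hindep : ∀ (a : 𝒜) (b : ℬ),
      μ {ω | A ω = a ∧ B ω = b} = μ {ω | A ω = a} * μ {ω | B ω = b})
    (hgen : GeneratedBy μ κ A B U V (fun _ => ())) :
    IsTrivialPair μ (pair A U) (pair B V) :=
  stmt12_general μ κ hκ A B U V hA hB hU hV hindep hgen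

end SecureComputation
end

section
/- Let X and Y be finite-valued random variables on a probability space. Then there exists a common part W of (X,Y); moreover, W may be taken to be φ ∘ X where φ maps each x in the range of X to the connected component of the bipartite graph on the ranges of X and Y with an edge between x and y whenever P(X = x ∧ Y = y) > 0. -/
open MeasureTheory Real
open scoped ENNReal

namespace SecureComputation

variable {Ω : Type*} [MeasurableSpace Ω]

/-- `W` is a common part of the pair `(X,Y)`: it is almost surely a function of `X` alone
and of `Y` alone, and any finite-valued random variable with this property is almost surely
a function of `W`. -/
def IsCommonPart {𝒳 𝒴 𝒲 : Type*} (μ : Measure Ω) (X : Ω → 𝒳) (Y : Ω → 𝒴)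
    (W : Ω → 𝒲) : Prop :=
  (∃ f : 𝒳 → 𝒲, ∀ᵐ ω ∂μ, W ω = f (X ω)) ∧
  (∃ g : 𝒴 → 𝒲, ∀ᵐ ω ∂μ, W ω = g (Y ω)) ∧
  ∀ (𝒲' : Type) (_ : Fintype 𝒲') (W' : Ω → 𝒲'),
    (∃ f' : 𝒳 → 𝒲', ∀ᵐ ω ∂μ, W' ω = f' (X ω)) →
    (∃ g' : 𝒴 → 𝒲', ∀ᵐ ω ∂μ, W' ω = g' (Y ω)) →
    ∃ h : 𝒲 → 𝒲', ∀ᵐ ω ∂μ, W' ω = h (W ω)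

/-!
If `W'` is almost surely both `f' ∘ X` and `g' ∘ Y`, then `f' x = g' y` for every edge `(x, y)`
of positive probability, so `Sum.elim f' g'` is constant on connected components and `W'`
factors through the component of `X`. Conversely the component of `X` is almost surely that of
`Y`, since `(X, Y)` almost surely lands on an edge.
-/

variable {μ : Measure Ω}

theorem DiscreteRV.comp_s13 {α β : Type*} [Countable α] {X : Ω → α} (hX : DiscreteRV X)
    (φ : α → β) : DiscreteRV (φ ∘ X) := fun b => by
  rw [Set.preimage_comp, ← Set.biUnion_preimage_singleton]
  exact MeasurableSet.biUnion (Set.to_countable _) fun x _ => hX x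

theorem ae_measure_preimage_singleton_ne_zero {α : Type*} [Countable α] (Z : Ω → α) :
    ∀ᵐ ω ∂μ, μ (Z ⁻¹' {Z ω}) ≠ 0 := by
  have hnull : {ω | ¬μ (Z ⁻¹' {Z ω}) ≠ 0} = ⋃ a ∈ {a | μ (Z ⁻¹' {a}) = 0}, Z ⁻¹' {a} := by
    ext; simp
  rw [ae_iff, hnull]
  exact (measure_biUnion_null_iff (Set.to_countable _)).2 fun _ ha => ha

theorem ae_measure_joint_fiber_ne_zero {𝒳 𝒴 : Type*} [Countable 𝒳] [Countable 𝒴]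
    (X : Ω → 𝒳) (Y : Ω → 𝒴) : ∀ᵐ ω ∂μ, μ {ω' | X ω' = X ω ∧ Y ω' = Y ω} ≠ 0 := by
  simpa [pair, Set.preimage, Prod.ext_iff] using
    ae_measure_preimage_singleton_ne_zero (μ := μ) (pair X Y)

theorem eq_of_ae_eq_comp_of_measure_ne_zero {𝒳 𝒴 𝒲 : Type*} {X : Ω → 𝒳} {Y : Ω → 𝒴}
    {W : Ω → 𝒲} {f : 𝒳 → 𝒲} {g : 𝒴 → 𝒲} (hf : ∀ᵐ ω ∂μ, W ω = f (X ω))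
    (hg : ∀ᵐ ω ∂μ, W ω = g (Y ω)) {x : 𝒳} {y : 𝒴} (hxy : μ {ω | X ω = x ∧ Y ω = y} ≠ 0) :
    f x = g y := by
  by_contra hne
  refine hxy (measure_mono_null ?_ (ae_iff.1 (hf.and hg)))
  rintro ω ⟨rfl, rfl⟩ ⟨hWf, hWg⟩
  exact hne (hWf.symm.trans hWg)

variable (μ) in
theorem isCommonPart_quotMk_edgeRel {𝒳 𝒴 : Type*} [Countable 𝒳] [Countable 𝒴]
    (X : Ω → 𝒳) (Y : Ω → 𝒴) :
    IsCommonPart μ X Y (fun ω => Quot.mk (edgeRel μ X Y) (Sum.inl (X ω))) := by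
  refine ⟨⟨fun x => Quot.mk _ (Sum.inl x), .of_forall fun _ => rfl⟩,
    ⟨fun y => Quot.mk _ (Sum.inr y), ?_⟩, ?_⟩
  · filter_upwards [ae_measure_joint_fiber_ne_zero X Y] with ω hω
    exact Quot.sound (Or.inl ⟨_, _, rfl, rfl, hω⟩)
  · rintro 𝒲' - W' ⟨f', hf'⟩ ⟨g', hg'⟩
    refine ⟨Quot.lift (Sum.elim f' g') ?_, hf'⟩
    rintro _ _ (⟨x, y, rfl, rfl, hxy⟩ | ⟨x, y, rfl, rfl, hxy⟩)
    · exact eq_of_ae_eq_comp_of_measure_ne_zero hf' hg' hxy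
    · exact (eq_of_ae_eq_comp_of_measure_ne_zero hf' hg' hxy).symm

theorem stmt13_general {Ω : Type*} [MeasurableSpace Ω] (μ : Measure Ω)
    {𝒳 𝒴 : Type} [Fintype 𝒳] [Fintype 𝒴]
    (X : Ω → 𝒳) (Y : Ω → 𝒴) (hX : DiscreteRV X) :
    (∃ (𝒲 : Type) (_ : Finite 𝒲) (W : Ω → 𝒲), DiscreteRV W ∧ IsCommonPart μ X Y W) ∧
    IsCommonPart μ X Y (fun ω => Quot.mk (edgeRel μ X Y) (Sum.inl (X ω))) := by
  have hW := isCommonPart_quotMk_edgeRel μ X Y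
  exact ⟨⟨_, inferInstance, _, hX.comp_s13 fun x => Quot.mk (edgeRel μ X Y) (Sum.inl x), hW⟩, hW⟩

/-- A common part of `(X,Y)` always exists; moreover, it may be taken to be `φ ∘ X` where
`φ` maps each `x` to its connected component in the bipartite graph of the joint law
(encoded as the quotient of `𝒳 ⊕ 𝒴` by the edge relation). -/
theorem stmt13 {Ω : Type*} [MeasurableSpace Ω] (μ : Measure Ω) [IsProbabilityMeasure μ]
    {𝒳 𝒴 : Type} [Fintype 𝒳] [Fintype 𝒴] [Nonempty 𝒳] [Nonempty 𝒴]
    (X : Ω → 𝒳) (Y : Ω → 𝒴) (hX : DiscreteRV X) (hY : DiscreteRV Y) :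
    (∃ (𝒲 : Type) (_ : Finite 𝒲) (W : Ω → 𝒲), DiscreteRV W ∧ IsCommonPart μ X Y W) ∧
    IsCommonPart μ X Y (fun ω => Quot.mk (edgeRel μ X Y) (Sum.inl (X ω))) :=
  stmt13_general μ X Y hX

end SecureComputation
end

section
/- Let X, Y, W be finite-valued random variables on a probability space such that W = f ∘ X almost surely and W = g ∘ Y almost surely for some deterministic functions f and g, and such that I[X;Y|W] = 0. Then I[X;Y] = H[W]. -/
open MeasureTheory Real
open scoped ENNReal

namespace SecureComputation

variable {Ω : Type*} [MeasurableSpace Ω]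

/-! Since `W` is almost surely a function of `X`, of `Y`, and hence of `(X, Y)`, adjoining `W` to
any of these leaves its entropy unchanged, so `I[X;Y|W]` collapses to `I[X;Y] - H[W]`. -/

section

variable {𝒳 𝒲 : Type*} (μ : Measure Ω)

lemma ent_congr_ae {X X' : Ω → 𝒳} (h : X =ᵐ[μ] X') : ent μ X = ent μ X' := by
  unfold ent
  refine tsum_congr fun x => ?_
  have hpre : X ⁻¹' {x} =ᵐ[μ] X' ⁻¹' {x} := by
    filter_upwards [h] with ω hω
    change (X ω = x) = (X' ω = x)
    rw [hω]
  rw [measure_congr hpre]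

lemma ent_pair_comp (X : Ω → 𝒳) (f : 𝒳 → 𝒲) : ent μ (pair X (f ∘ X)) = ent μ X := by
  have hgraph : Function.Injective fun x => (x, f x) := fun _ _ h => congrArg Prod.fst h
  have hpre : ∀ x, pair X (f ∘ X) ⁻¹' {(x, f x)} = X ⁻¹' {x} := by
    intro x
    ext ω
    simp only [pair, Function.comp, Set.mem_preimage, Set.mem_singleton_iff, Prod.mk.injEq,
      and_iff_left_iff_imp]
    rintro rfl
    rfl
  -- Off the graph of `f` the preimage is empty and `negMulLog 0 = 0`, so no finiteness is needed.
  have hsupp : (Function.support fun p : 𝒳 × 𝒲 =>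
      negMulLog (μ (pair X (f ∘ X) ⁻¹' {p})).toReal) ⊆ Set.range fun x => (x, f x) := by
    rintro ⟨x, w⟩ hp
    by_contra hoff
    have hempty : pair X (f ∘ X) ⁻¹' {(x, w)} = ∅ := by
      ext ω
      simp only [pair, Function.comp, Set.mem_preimage, Set.mem_singleton_iff, Prod.mk.injEq,
        Set.mem_empty_iff_false, iff_false, not_and]
      rintro rfl rfl
      exact hoff ⟨X ω, rfl⟩
    simp [hempty] at hp
  unfold ent
  rw [← hgraph.tsum_eq hsupp]
  simp only [hpre]

lemma ent_pair_of_ae_eq_comp {X : Ω → 𝒳} {W : Ω → 𝒲} {f : 𝒳 → 𝒲}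
    (h : ∀ᵐ ω ∂μ, W ω = f (X ω)) : ent μ (pair X W) = ent μ X := by
  rw [← ent_pair_comp μ X f]
  refine ent_congr_ae μ ?_
  filter_upwards [h] with ω hω
  simp [pair, hω]

end

theorem stmt14_general {Ω : Type*} [MeasurableSpace Ω] (μ : Measure Ω)
    {𝒳 𝒴 𝒲 : Type}
    (X : Ω → 𝒳) (Y : Ω → 𝒴) (W : Ω → 𝒲)
    (f : 𝒳 → 𝒲) (g : 𝒴 → 𝒲)
    (hf : ∀ᵐ ω ∂μ, W ω = f (X ω)) (hg : ∀ᵐ ω ∂μ, W ω = g (Y ω))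
    (hcmi : cmi μ X Y W = 0) :
    mi μ X Y = ent μ W := by
  have hXW : ent μ (pair X W) = ent μ X := ent_pair_of_ae_eq_comp μ hf
  have hYW : ent μ (pair Y W) = ent μ Y := ent_pair_of_ae_eq_comp μ hg
  have hXYW : ent μ (pair (pair X Y) W) = ent μ (pair X Y) :=
    ent_pair_of_ae_eq_comp μ (f := f ∘ Prod.fst) hf
  unfold cmi at hcmi
  unfold mi
  linarith

/-- If `W` is almost surely a deterministic function of `X` alone and of `Y` alone, and
`I[X;Y|W] = 0`, then `I[X;Y] = H[W]`. -/
theorem stmt14 {Ω : Type*} [MeasurableSpace Ω] (μ : Measure Ω) [IsProbabilityMeasure μ]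
    {𝒳 𝒴 𝒲 : Type} [Fintype 𝒳] [Fintype 𝒴] [Fintype 𝒲]
    [Nonempty 𝒳] [Nonempty 𝒴] [Nonempty 𝒲]
    (X : Ω → 𝒳) (Y : Ω → 𝒴) (W : Ω → 𝒲)
    (hX : DiscreteRV X) (hY : DiscreteRV Y) (hW : DiscreteRV W)
    (f : 𝒳 → 𝒲) (g : 𝒴 → 𝒲)
    (hf : ∀ᵐ ω ∂μ, W ω = f (X ω)) (hg : ∀ᵐ ω ∂μ, W ω = g (Y ω))
    (hcmi : cmi μ X Y W = 0) :
    mi μ X Y = ent μ W :=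
  stmt14_general μ X Y W f g hf hg hcmi

end SecureComputation
end
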